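/- Let v : ℝ_{>0} → ℝ_{>0} be a twice continuously differentiable, concave, strictly increasing function, surjective onto ℝ_{>0}, with lim_{s→0} v(s) = 0 and lim_{s→0} v'(s) > 0, and let ψ_v : ℝ^d → ℝ^d be the associated radial map ψ_v(x) = v(‖x‖₂) x/‖x‖₂ (with ψ_v(0) = 0). Then for any two distinct vectors x ≠ y in ℝ^d, the function t ↦ ‖ψ_v^{−1}((1−t) ψ_v(x) + t ψ_v(y))‖₂² is strongly convex on [0,1], i.e., there exists μ > 0 such that t ↦ ‖ψ_v^{−1}((1−t) ψ_v(x) + t ψ_v(y))‖₂² − (μ/2) t² is convex on [0,1]. -/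

import Mathlib

open Classical

/-- The radial rescaling map `ψ_v(x) = v(‖x‖) • x/‖x‖` (with `ψ_v(0) = 0`)
generated by a function `v : ℝ_{>0} → ℝ_{>0}`. -/
noncomputable def psiV (d : ℕ) (v : ℝ → ℝ)
    (x : EuclideanSpace ℝ (Fin d)) : EuclideanSpace ℝ (Fin d) :=
  if x = 0 then 0 else (v ‖x‖ / ‖x‖) • x

open Set Filter in
lemma aux_H (v vinv : ℝ → ℝ) (L : ℝ) (hL : 0 < L)
    (hC2 : ContDiffOn ℝ 2 v (Set.Ioi (0:ℝ)))
    (hconc : ConcaveOn ℝ (Set.Ioi (0:ℝ)) v)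
    (hmono : StrictMonoOn v (Set.Ioi (0:ℝ)))
    (hpos : ∀ s : ℝ, 0 < s → 0 < v s)
    (hsurj : ∀ t : ℝ, 0 < t → ∃ s : ℝ, 0 < s ∧ v s = t)
    (hvinv_left : ∀ s, 0 < s → vinv (v s) = s)
    (hvinv_right : ∀ t, 0 < t → v (vinv t) = t)
    (hlim0 : Tendsto v (nhdsWithin 0 (Ioi 0)) (nhds 0))
    (hLtend : Tendsto (deriv v) (nhdsWithin 0 (Ioi 0)) (nhds L)) :
    ConvexOn ℝ (Ici 0) (fun r => (if 0 < r then vinv r else 0)^2 - r^2/L^2) ∧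
    MonotoneOn (fun r => (if 0 < r then vinv r else 0)^2 - r^2/L^2) (Ici 0) := by
  set W : ℝ → ℝ := fun r => if 0 < r then vinv r else 0 with hW
  set H : ℝ → ℝ := fun r => (W r)^2 - r^2/L^2 with hH
  -- differentiability of v
  have hdiff : ∀ s : ℝ, 0 < s → DifferentiableAt ℝ v s := by
    intro s hs
    exact (hC2.differentiableOn (by norm_num)).differentiableAt
      (isOpen_Ioi.mem_nhds hs)
  have hvderiv : ∀ s : ℝ, 0 < s → HasDerivAt v (deriv v s) s :=
    fun s hs => (hdiff s hs).hasDerivAt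
  -- deriv v is antitone
  have hanti : AntitoneOn (deriv v) (Ioi 0) :=
    hconc.antitoneOn_deriv (fun s hs => hdiff s hs)
  -- deriv v ≤ L
  have hv'_le : ∀ s : ℝ, 0 < s → deriv v s ≤ L := by
    intro s hs
    refine ge_of_tendsto hLtend ?_
    filter_upwards [Ioo_mem_nhdsGT_of_mem (by exact ⟨le_refl 0, hs⟩ : (0:ℝ) ∈ Ico 0 s)]
      with u hu
    exact hanti hu.1 hs hu.2.le
  -- deriv v > 0
  have hv'_pos : ∀ s : ℝ, 0 < s → 0 < deriv v s := by
    intro s hs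
    have h1 : slope v s (s+1) ≤ deriv v s :=
      hconc.slope_le_deriv hs (by simp; linarith : (s:ℝ)+1 ∈ Ioi 0) (by linarith) (hdiff s hs)
    have h2 : 0 < slope v s (s+1) := by
      rw [slope_def_field]
      have hm := hmono hs (show (s:ℝ)+1 ∈ Ioi 0 by simp; linarith) (by linarith)
      have h4 : 0 < v (s+1) - v s := by linarith
      have h3 : (0:ℝ) < (s+1) - s := by linarith
      positivity
    linarith
  -- slope bound : v s2 - v s1 ≤ L * (s2 - s1)
  have hslope : ∀ s1 s2 : ℝ, 0 < s1 → s1 < s2 → v s2 - v s1 ≤ L * (s2 - s1) := by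
    intro s1 s2 h1 h12
    have hs2 := hconc.slope_le_deriv h1 (show s2 ∈ Ioi 0 by simp; linarith) h12 (hdiff s1 h1)
    rw [slope_def_field] at hs2
    have hd := hv'_le s1 h1
    have h3 : (0:ℝ) < s2 - s1 := by linarith
    calc v s2 - v s1 = (v s2 - v s1)/(s2-s1) * (s2-s1) := by field_simp
    _ ≤ L * (s2 - s1) := by
        apply mul_le_mul_of_nonneg_right _ h3.le
        calc (v s2 - v s1)/(s2-s1) ≤ deriv v s1 := hs2
        _ ≤ L := hd
  -- v s ≤ L s
  have hv_le : ∀ s : ℝ, 0 < s → v s ≤ L * s := by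
    intro s hs
    have key : ∀ ε : ℝ, ε ∈ Ioo 0 s → v s - L * s ≤ v ε := by
      intro ε hε
      have := hslope ε s hε.1 hε.2
      nlinarith [hε.1]
    have hfin : v s - L * s ≤ 0 := by
      refine ge_of_tendsto hlim0 ?_
      filter_upwards [Ioo_mem_nhdsGT_of_mem (by exact ⟨le_refl 0, hs⟩ : (0:ℝ) ∈ Ico 0 s)]
        with ε hε using key ε hε
    linarith
  -- vinv positivity
  have hvinv_pos : ∀ t : ℝ, 0 < t → 0 < vinv t := by
    intro t ht
    obtain ⟨s, hs, rfl⟩ := hsurj t ht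
    rw [hvinv_left s hs]; exact hs
  -- vinv strict mono
  have hvinv_smono : StrictMonoOn vinv (Ioi 0) := by
    intro t1 h1 t2 h2 h12
    simp only [mem_Ioi] at h1 h2
    by_contra hle
    push_neg at hle
    have := hmono.monotoneOn (by simp [hvinv_pos t2 h2]) (by simp [hvinv_pos t1 h1]) hle
    rw [hvinv_right t1 h1, hvinv_right t2 h2] at this
    linarith
  -- vinv lower bound
  have hvinv_lb : ∀ t : ℝ, 0 < t → t / L ≤ vinv t := by
    intro t ht
    have h1 := hv_le (vinv t) (hvinv_pos t ht)
    rw [hvinv_right t ht] at h1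
    rw [div_le_iff₀ hL]
    linarith
  -- vinv continuous at t > 0
  have hvinv_cont : ∀ t : ℝ, 0 < t → ContinuousAt vinv t := by
    intro t ht
    refine hvinv_smono.continuousAt_of_image_mem_nhds (isOpen_Ioi.mem_nhds ht) ?_
    have himg : Ioi (0:ℝ) ⊆ vinv '' Ioi 0 := by
      intro u hu
      exact ⟨v u, by simp [hpos u hu], hvinv_left u hu⟩
    exact mem_of_superset (isOpen_Ioi.mem_nhds (hvinv_pos t ht)) himg
  -- vinv has derivative
  have hvinv_deriv : ∀ t : ℝ, 0 < t → HasDerivAt vinv (deriv v (vinv t))⁻¹ t := by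
    intro t ht
    refine HasDerivAt.of_local_left_inverse (hvinv_cont t ht)
      (hvderiv (vinv t) (hvinv_pos t ht)) (ne_of_gt (hv'_pos _ (hvinv_pos t ht))) ?_
    filter_upwards [isOpen_Ioi.mem_nhds ht] with u hu
    exact hvinv_right u hu
  -- vinv slope lower bound
  have hvinv_slope : ∀ r1 r2 : ℝ, 0 < r1 → r1 < r2 → (r2 - r1)/L ≤ vinv r2 - vinv r1 := by
    intro r1 r2 h1 h12
    have hw12 := hvinv_smono h1 (by simp; linarith : r2 ∈ Ioi 0) h12
    have := hslope (vinv r1) (vinv r2) (hvinv_pos r1 h1) hw12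
    rw [hvinv_right r1 h1, hvinv_right r2 (by linarith)] at this
    rw [div_le_iff₀ hL]
    nlinarith
  -- derivative of H on Ioi 0
  have hHasDerivH : ∀ r : ℝ, 0 < r →
      HasDerivAt H (2 * vinv r * (deriv v (vinv r))⁻¹ - 2*r/L^2) r := by
    intro r hr
    have h1 : HasDerivAt (fun u => (vinv u)^2 - u^2/L^2)
        (2 * vinv r * (deriv v (vinv r))⁻¹ - 2*r/L^2) r := by
      have ha : HasDerivAt (fun u => (vinv u)^2)
          (2 * vinv r * (deriv v (vinv r))⁻¹) r := by
        have := (hvinv_deriv r hr).fun_pow 2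
        simpa [mul_comm, mul_assoc, mul_left_comm] using this
      have hb : HasDerivAt (fun u : ℝ => u^2/L^2) (2*r/L^2) r := by
        have := (hasDerivAt_pow 2 r).div_const (L^2)
        simpa [mul_comm] using this
      simpa using ha.fun_sub hb
    refine h1.congr_of_eventuallyEq ?_
    filter_upwards [isOpen_Ioi.mem_nhds hr] with u hu
    simp [hH, hW, mem_Ioi.mp hu]
  have hderivH : ∀ r : ℝ, 0 < r →
      deriv H r = 2 * vinv r * (deriv v (vinv r))⁻¹ - 2*r/L^2 :=
    fun r hr => (hHasDerivH r hr).deriv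
  -- w' bounds
  have hw'_ge : ∀ t : ℝ, 0 < t → 1/L ≤ (deriv v (vinv t))⁻¹ := by
    intro t ht
    rw [one_div]
    exact inv_anti₀ (hv'_pos _ (hvinv_pos t ht)) (hv'_le _ (hvinv_pos t ht))
  -- deriv H nonneg on Ioi 0
  have hderivH_nonneg : ∀ r : ℝ, 0 < r → 0 ≤ deriv H r := by
    intro r hr
    rw [hderivH r hr]
    have h1 := hvinv_lb r hr
    have h2 := hw'_ge r hr
    have h3 := hvinv_pos r hr
    have h4 : 0 < (deriv v (vinv r))⁻¹ := inv_pos.mpr (hv'_pos _ h3)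
    have h2' : 1 ≤ (deriv v (vinv r))⁻¹ * L := by
      have hh := mul_le_mul_of_nonneg_right h2 hL.le
      rwa [one_div, inv_mul_cancel₀ (ne_of_gt hL)] at hh
    rw [div_le_iff₀ hL] at h1
    have hprod : r * 1 ≤ (vinv r * L) * ((deriv v (vinv r))⁻¹ * L) :=
      mul_le_mul h1 h2' zero_le_one (by positivity)
    have hL2 : (0:ℝ) < L^2 := by positivity
    rw [sub_nonneg, div_le_iff₀ hL2]
    nlinarith [hprod]
  -- deriv H monotone on Ioi 0
  have hderivH_mono : MonotoneOn (deriv H) (Ioi 0) := by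
    intro r1 hr1 r2 hr2 h12
    simp only [mem_Ioi] at hr1 hr2
    rcases eq_or_lt_of_le h12 with rfl | h12
    · exact le_refl _
    rw [hderivH r1 hr1, hderivH r2 hr2]
    set w1 := vinv r1
    set w2 := vinv r2
    set d1 := (deriv v w1)⁻¹
    set d2 := (deriv v w2)⁻¹
    have hw1 : 0 < w1 := hvinv_pos r1 hr1
    have hw2 : 0 < w2 := hvinv_pos r2 hr2
    have hw12 : w1 < w2 := hvinv_smono (mem_Ioi.mpr hr1) (mem_Ioi.mpr hr2) h12
    have hd12 : d1 ≤ d2 := by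
      have hh := hanti (mem_Ioi.mpr hw1) (mem_Ioi.mpr hw2) hw12.le
      exact inv_anti₀ (hv'_pos w2 hw2) hh
    have hd1 : 0 < d1 := inv_pos.mpr (hv'_pos w1 hw1)
    have hd2 : 0 < d2 := inv_pos.mpr (hv'_pos w2 hw2)
    have hd2L : 1 ≤ d2 * L := by
      have h2 := hw'_ge r2 hr2
      have hh := mul_le_mul_of_nonneg_right h2 hL.le
      rwa [one_div, inv_mul_cancel₀ (ne_of_gt hL)] at hh
    have hsl : r2 - r1 ≤ L * (w2 - w1) := by
      have hh := hvinv_slope r1 r2 hr1 h12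
      rw [div_le_iff₀ hL] at hh
      nlinarith
    have hL2 : (0:ℝ) < L^2 := by positivity
    have key : (r2 - r1) ≤ L^2 * (w2*d2 - w1*d1) := by
      have e1 : 0 ≤ w1 * (d2 - d1) := mul_nonneg hw1.le (by linarith)
      have e3 : (w2 - w1) ≤ (d2*L) * (w2 - w1) :=
        le_mul_of_one_le_left (by linarith) hd2L
      nlinarith
    have key2 : (r2 - r1)/L^2 ≤ w2*d2 - w1*d1 := by
      rw [div_le_iff₀ hL2]; nlinarith [key]
    have e4 : 2 * r2 / L ^ 2 - 2 * r1 / L^2 = 2 * ((r2 - r1)/L^2) := by ring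
    linarith [key2, e4]
  -- continuity of W at 0 within Ici 0
  have hWtend : Tendsto W (nhdsWithin 0 (Ici 0)) (nhds 0) := by
    rw [tendsto_order]
    constructor
    · intro a ha
      filter_upwards with r
      have : 0 ≤ W r := by
        by_cases h : 0 < r
        · simp only [hW, if_pos h]; exact (hvinv_pos r h).le
        · simp only [hW, if_neg h]; exact le_refl 0
      linarith
    · intro a ha
      have hva : 0 < v (a/2) := hpos _ (by linarith)
      have hmem : Iio (v (a/2)) ∈ nhdsWithin (0:ℝ) (Ici 0) :=
        mem_nhdsWithin_of_mem_nhds (Iio_mem_nhds hva)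
      filter_upwards [hmem] with r hr
      by_cases h : 0 < r
      · simp only [hW, if_pos h]
        have h1 : vinv r < vinv (v (a/2)) :=
          hvinv_smono (mem_Ioi.mpr h) (mem_Ioi.mpr hva) hr
        rw [hvinv_left _ (by linarith : (0:ℝ) < a/2)] at h1
        linarith
      · simp only [hW, if_neg h]; linarith
  have hH0 : H 0 = 0 := by simp [hH, hW]
  have hcontH : ContinuousOn H (Ici 0) := by
    intro r hr
    rcases eq_or_lt_of_le (mem_Ici.mp hr) with rfl | hr'
    · rw [ContinuousWithinAt, hH0]
      have h1 : Tendsto (fun r : ℝ => (W r)^2) (nhdsWithin 0 (Ici 0)) (nhds 0) := by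
        have := hWtend.pow 2
        simpa using this
      have h2 : Tendsto (fun r : ℝ => r^2/L^2) (nhdsWithin 0 (Ici 0)) (nhds 0) := by
        have : Tendsto (fun r : ℝ => r^2/L^2) (nhds 0) (nhds (0^2/L^2)) := by
          apply Tendsto.div_const
          exact (continuous_pow 2).tendsto 0
        simpa using this.mono_left nhdsWithin_le_nhds
      simpa using h1.sub h2
    · exact ((hHasDerivH r hr').differentiableAt.continuousAt).continuousWithinAt
  have hdiffH : DifferentiableOn ℝ H (interior (Ici (0:ℝ))) := by
    rw [interior_Ici]
    exact fun r hr => (hHasDerivH r (mem_Ioi.mp hr)).differentiableAt.differentiableWithinAt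
  constructor
  · exact MonotoneOn.convexOn_of_deriv (convex_Ici 0) hcontH hdiffH
      (by rw [interior_Ici]; exact hderivH_mono)
  · exact monotoneOn_of_deriv_nonneg (convex_Ici 0) hcontH hdiffH
      (by rw [interior_Ici]; exact fun r hr => hderivH_nonneg r (mem_Ioi.mp hr))


/-- for a twice continuously differentiable, concave, strictly increasing
`v : ℝ_{>0} → ℝ_{>0}`, surjective onto `ℝ_{>0}`, with `lim_{s→0} v(s) = 0` and
`lim_{s→0} v'(s) > 0`, and for any distinct `x ≠ y` in `ℝ^d`, the function
`t ↦ ‖ψ_v⁻¹((1−t) ψ_v(x) + t ψ_v(y))‖²` is strongly convex on `[0,1]`, where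
`ψ_v⁻¹ = ψ_{vinv}` and `vinv` is the inverse function of `v`. -/
theorem norm_sq_along_psiV_segment_strongly_convex (d : ℕ) (v vinv : ℝ → ℝ)
    (hC2 : ContDiffOn ℝ 2 v (Set.Ioi (0 : ℝ)))
    (hconc : ConcaveOn ℝ (Set.Ioi (0 : ℝ)) v)
    (hmono : StrictMonoOn v (Set.Ioi (0 : ℝ)))
    (hpos : ∀ s : ℝ, 0 < s → 0 < v s)
    (hsurj : ∀ t : ℝ, 0 < t → ∃ s : ℝ, 0 < s ∧ v s = t)
    (hvinv_left : ∀ s : ℝ, 0 < s → vinv (v s) = s)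
    (hvinv_right : ∀ t : ℝ, 0 < t → v (vinv t) = t)
    (hlim0 : Filter.Tendsto v (nhdsWithin 0 (Set.Ioi (0 : ℝ))) (nhds 0))
    (hlim' : ∃ L : ℝ, 0 < L ∧
      Filter.Tendsto (deriv v) (nhdsWithin 0 (Set.Ioi (0 : ℝ))) (nhds L))
    (x y : EuclideanSpace ℝ (Fin d)) (hxy : x ≠ y) :
    ∃ μ : ℝ, 0 < μ ∧
      ConvexOn ℝ (Set.Icc (0 : ℝ) 1)
        (fun t : ℝ =>
          ‖psiV d vinv ((1 - t) • psiV d v x + t • psiV d v y)‖ ^ 2 - μ / 2 * t ^ 2) := by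
  obtain ⟨L, hL, hLtend⟩ := hlim'
  obtain ⟨Hconv, Hmono⟩ := aux_H v vinv L hL hC2 hconc hmono hpos hsurj hvinv_left
    hvinv_right hlim0 hLtend
  set W : ℝ → ℝ := fun r => if 0 < r then vinv r else 0 with hWdef
  set H : ℝ → ℝ := fun r => (W r)^2 - r^2/L^2 with hHdef
  have hvinv_pos : ∀ t : ℝ, 0 < t → 0 < vinv t := by
    intro t ht
    obtain ⟨s, hs, rfl⟩ := hsurj t ht
    rw [hvinv_left s hs]; exact hs
  set a := psiV d v x with hadef
  set b := psiV d v y with hbdef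
  -- norm of psiV v
  have hnormv : ∀ z : EuclideanSpace ℝ (Fin d), z ≠ 0 → ‖psiV d v z‖ = v ‖z‖ := by
    intro z hz
    have h0 : (0:ℝ) < ‖z‖ := norm_pos_iff.mpr hz
    rw [psiV, if_neg hz, norm_smul, Real.norm_eq_abs, abs_div,
      abs_of_pos (hpos _ h0), abs_of_pos h0]
    field_simp
  -- a ≠ b
  have hab : a ≠ b := by
    intro h
    apply hxy
    by_cases hx0 : x = 0
    · by_cases hy0 : y = 0
      · rw [hx0, hy0]
      · exfalso
        have hb0 : ‖b‖ = v ‖y‖ := hnormv y hy0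
        have : ‖b‖ > 0 := by rw [hb0]; exact hpos _ (norm_pos_iff.mpr hy0)
        rw [hadef, psiV, if_pos hx0] at h
        rw [← h] at this
        simp at this
    · by_cases hy0 : y = 0
      · exfalso
        have ha0 : ‖a‖ = v ‖x‖ := hnormv x hx0
        have : ‖a‖ > 0 := by rw [ha0]; exact hpos _ (norm_pos_iff.mpr hx0)
        rw [hbdef, psiV, if_pos hy0] at h
        rw [h] at this
        simp at this
      · -- both nonzero
        have hnx : (0:ℝ) < ‖x‖ := norm_pos_iff.mpr hx0
        have hny : (0:ℝ) < ‖y‖ := norm_pos_iff.mpr hy0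
        have hnormeq : v ‖x‖ = v ‖y‖ := by
          have hh : ‖a‖ = ‖b‖ := congrArg norm h
          rwa [hadef, hbdef, hnormv x hx0, hnormv y hy0] at hh
        have hxynorm : ‖x‖ = ‖y‖ :=
          hmono.injOn (Set.mem_Ioi.mpr hnx) (Set.mem_Ioi.mpr hny) hnormeq
        have hk : v ‖x‖ / ‖x‖ ≠ 0 :=
          div_ne_zero (ne_of_gt (hpos _ hnx)) (ne_of_gt hnx)
        rw [hadef, hbdef, psiV, psiV, if_neg hx0, if_neg hy0, ← hxynorm] at h
        exact smul_right_injective _ hk h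
  -- norm sq of psiV vinv
  have hnormsq : ∀ z : EuclideanSpace ℝ (Fin d),
      ‖psiV d vinv z‖^2 = (W ‖z‖)^2 := by
    intro z
    by_cases hz : z = 0
    · simp [psiV, hz, hWdef]
    · have h0 : (0:ℝ) < ‖z‖ := norm_pos_iff.mpr hz
      rw [psiV, if_neg hz, hWdef]
      simp only [if_pos h0]
      rw [norm_smul, Real.norm_eq_abs, mul_pow, sq_abs, div_pow]
      field_simp
  set c : ℝ → EuclideanSpace ℝ (Fin d) := fun t => (1-t) • a + t • b with hcdef
  set I : ℝ := inner ℝ a (b - a) with hIdef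
  have hba : b - a ≠ 0 := sub_ne_zero_of_ne (Ne.symm hab)
  have hbapos : (0:ℝ) < ‖b - a‖ := norm_pos_iff.mpr hba
  refine ⟨2*‖b-a‖^2/L^2, by positivity, ?_⟩
  have hr2 : ∀ t : ℝ, ‖c t‖^2 = ‖a‖^2 + 2*t*I + t^2*‖b-a‖^2 := by
    intro t
    have hct : c t = a + t • (b - a) := by
      simp only [hcdef]; module
    rw [hct, norm_add_sq_real, real_inner_smul_right, norm_smul, Real.norm_eq_abs,
      mul_pow, sq_abs, ← hIdef]
    ring
  have hfe : (fun t : ℝ =>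
        ‖psiV d vinv ((1 - t) • a + t • b)‖ ^ 2 - 2*‖b-a‖^2/L^2 / 2 * t ^ 2)
      = fun t : ℝ => H ‖c t‖ + (‖a‖^2 + 2*t*I)/L^2 := by
    funext t
    have h1 : ‖psiV d vinv ((1 - t) • a + t • b)‖ ^ 2 = (W ‖c t‖)^2 := hnormsq _
    rw [h1, hHdef]
    simp only
    rw [hr2 t]
    field_simp
    ring
  rw [hfe]
  have part1 : ConvexOn ℝ (Set.Icc (0:ℝ) 1) (fun t => H ‖c t‖) := by
    refine ⟨convex_Icc 0 1, ?_⟩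
    intro t1 ht1 t2 ht2 α β hα hβ hαβ
    obtain rfl : β = 1 - α := by linarith
    simp only [smul_eq_mul]
    have hcomb : c (α*t1 + (1-α)*t2) = α • c t1 + (1-α) • c t2 := by
      simp only [hcdef]; module
    have hnle : ‖c (α*t1 + (1-α)*t2)‖ ≤ α*‖c t1‖ + (1-α)*‖c t2‖ := by
      rw [hcomb]
      calc ‖α • c t1 + (1-α) • c t2‖ ≤ ‖α • c t1‖ + ‖(1-α) • c t2‖ := norm_add_le _ _
      _ = α*‖c t1‖ + (1-α)*‖c t2‖ := by
          rw [norm_smul, norm_smul, Real.norm_eq_abs, Real.norm_eq_abs,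
            abs_of_nonneg hα, abs_of_nonneg hβ]
    have hmem1 : ‖c t1‖ ∈ Set.Ici (0:ℝ) := Set.mem_Ici.mpr (norm_nonneg _)
    have hmem2 : ‖c t2‖ ∈ Set.Ici (0:ℝ) := Set.mem_Ici.mpr (norm_nonneg _)
    have hmemc : α*‖c t1‖ + (1-α)*‖c t2‖ ∈ Set.Ici (0:ℝ) := by
      refine Set.mem_Ici.mpr (add_nonneg (mul_nonneg hα (norm_nonneg _))
        (mul_nonneg hβ (norm_nonneg _)))
    have step1 : H ‖c (α*t1 + (1-α)*t2)‖ ≤ H (α*‖c t1‖ + (1-α)*‖c t2‖) :=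
      Hmono (Set.mem_Ici.mpr (norm_nonneg _)) hmemc hnle
    have step2 := Hconv.2 hmem1 hmem2 hα hβ hαβ
    simp only [smul_eq_mul] at step2
    exact step1.trans step2
  have part2 : ConvexOn ℝ (Set.Icc (0:ℝ) 1) (fun t => (‖a‖^2 + 2*t*I)/L^2) := by
    refine ⟨convex_Icc 0 1, ?_⟩
    intro t1 ht1 t2 ht2 α β hα hβ hαβ
    obtain rfl : β = 1 - α := by linarith
    simp only [smul_eq_mul]
    apply le_of_eq
    field_simp
    ring
  exact part1.add part2
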